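/- Let T₁ and T₂ be n-ary Γ-semirings. The product T₁ × T₂ with componentwise addition and componentwise n-ary multiplication is an n-ary Γ-semiring, and every prime Γ-ideal of T₁ × T₂ containing one of the factor ideals T₁ × {0} or {0} × T₂ is of the form P₁ × T₂ or T₁ × P₂ for a prime Γ-ideal Pᵢ of Tᵢ, provided {0} is absorbing (so T₁ × {0} and {0} × T₂ are Γ-ideals) and the primes are subtractive. -/

import Mathlib

universe u v w

/-- An `n`-ary `Γ`-semiring: a commutative monoid `T` together with an operation
`μ : Tⁿ × Γ^{n-1} → T`, additive in each `T`-slot, with `0` absorbing in each slot. -/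
structure NGS (T : Type u) (Γ : Type v) (n : ℕ) [AddCommMonoid T] where
  mu : (Fin n → T) → (Fin (n - 1) → Γ) → T
  mu_add : ∀ (x : Fin n → T) (γ : Fin (n - 1) → Γ) (j : Fin n) (a b : T),
    mu (Function.update x j (a + b)) γ
      = mu (Function.update x j a) γ + mu (Function.update x j b) γ
  mu_zero : ∀ (x : Fin n → T) (γ : Fin (n - 1) → Γ) (j : Fin n), x j = 0 → mu x γ = 0

variable {T : Type u} {Γ : Type v} {n : ℕ} [AddCommMonoid T]

/-- A `Γ`-ideal: an additive submonoid absorbing in every slot of `μ`. -/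
structure IsGammaIdeal (S : NGS T Γ n) (I : Set T) : Prop where
  zero_mem : (0 : T) ∈ I
  add_mem : ∀ a b : T, a ∈ I → b ∈ I → a + b ∈ I
  mu_mem : ∀ (x : Fin n → T) (γ : Fin (n - 1) → Γ) (j : Fin n), x j ∈ I → S.mu x γ ∈ I

/-- A prime `Γ`-ideal: a proper `Γ`-ideal `P` with `[x₁,…,xₙ]_γ⃗ ∈ P → ∃ j, xⱼ ∈ P`. -/
structure IsPrimeGammaIdeal (S : NGS T Γ n) (P : Set T) : Prop where
  isIdeal : IsGammaIdeal S P
  proper : P ≠ Set.univ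
  prime : ∀ (x : Fin n → T) (γ : Fin (n - 1) → Γ), S.mu x γ ∈ P → ∃ j, x j ∈ P

/-- The `Γ`-spectrum: the set of prime `Γ`-ideals. -/
def SpecGamma (S : NGS T Γ n) : Type u := {P : Set T // IsPrimeGammaIdeal S P}

/-- The zero set `V(I) = {P ∈ Spec_Γ(T) : I ⊆ P}`. -/
def V (S : NGS T Γ n) (I : Set T) : Set (SpecGamma S) := {P | I ⊆ P.1}

/-- The `Γ`-ideal generated by a subset. -/
def genIdeal (S : NGS T Γ n) (A : Set T) : Set T := ⋂₀ {I | IsGammaIdeal S I ∧ A ⊆ I}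

/-- The `Γ`-Zariski topology on `Spec_Γ(T)`, generated by complements of zero sets. -/
def zariskiTop (S : NGS T Γ n) : TopologicalSpace (SpecGamma S) :=
  TopologicalSpace.generateFrom {U | ∃ I, IsGammaIdeal S I ∧ U = (V S I)ᶜ}

/-- A morphism of `n`-ary `Γ`-semirings. -/
structure NGSHom {T' : Type w} [AddCommMonoid T'] (S : NGS T Γ n) (S' : NGS T' Γ n)
    (f : T → T') : Prop where
  map_zero : f 0 = 0
  map_add : ∀ a b : T, f (a + b) = f a + f b
  map_mu : ∀ (x : Fin n → T) (γ : Fin (n - 1) → Γ), f (S.mu x γ) = S'.mu (f ∘ x) γ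

/-- An identity family `(e, δ⃗)`: `[x,e,…,e]_δ⃗ = x` for all `x`. -/
def IsIdentityFamily [NeZero n] (S : NGS T Γ n) (e : T) (δ : Fin (n - 1) → Γ) : Prop :=
  ∀ x : T, S.mu (Function.update (fun _ => e) 0 x) δ = x

/-- Commutativity: `μ` is symmetric in the `T`-arguments. -/
def IsCommutative (S : NGS T Γ n) : Prop :=
  ∀ (x : Fin n → T) (γ : Fin (n - 1) → Γ) (σ : Equiv.Perm (Fin n)), S.mu (x ∘ σ) γ = S.mu x γ

/-- A multiplicatively closed subset (containing `e`). -/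
def MultClosed (S : NGS T Γ n) (e : T) (A : Set T) : Prop :=
  e ∈ A ∧ ∀ (x : Fin n → T) (γ : Fin (n - 1) → Γ), (∀ k, x k ∈ A) → S.mu x γ ∈ A

/-- The binary contraction `x·y = [x,y,e,…,e]_δ⃗` (needs `n ≥ 2`). -/
def cdot (S : NGS T Γ n) (hn : 1 < n) (e : T) (δ : Fin (n - 1) → Γ) (x y : T) : T :=
  S.mu (fun k => if k = ⟨0, Nat.lt_of_succ_lt hn⟩ then x else if k = ⟨1, hn⟩ then y else e) δ

/-- A maximal `Γ`-ideal. -/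
def IsMaximalGammaIdeal (S : NGS T Γ n) (M : Set T) : Prop :=
  IsGammaIdeal S M ∧ M ≠ Set.univ ∧
    ∀ J, IsGammaIdeal S J → J ≠ Set.univ → M ⊆ J → J = M

/-- Subtractive (`k`-ideal) condition. -/
def IsSubtractive (I : Set T) : Prop := ∀ x i : T, i ∈ I → x + i ∈ I → x ∈ I

/-!
The product operation is additive and `0`-absorbing in each slot because both of its components
are. If a subtractive Γ-ideal `P` of `T₁ × T₂` contains `T₁ × {0}`, then membership of `(a, b)`
depends only on `b`: `(a, b) = (a, 0) + (0, b)` with `(a, 0) ∈ P`, so additivity and subtractivity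
give `(a, b) ∈ P ↔ (0, b) ∈ P`. Hence `P = T₁ × P₂` for the slice `P₂ = {b | (0, b) ∈ P}`, and the
ideal and prime properties of `P` restrict to `P₂` along the slots `(0, xₖ)`.
-/

namespace NGS

variable {T₁ T₂ : Type*} [AddCommMonoid T₁] [AddCommMonoid T₂]

def prod (S₁ : NGS T₁ Γ n) (S₂ : NGS T₂ Γ n) : NGS (T₁ × T₂) Γ n where
  mu x γ := (S₁.mu (Prod.fst ∘ x) γ, S₂.mu (Prod.snd ∘ x) γ)
  mu_add x γ j a b := by
    simp only [Function.comp_update]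
    exact Prod.ext (S₁.mu_add _ γ j a.1 b.1) (S₂.mu_add _ γ j a.2 b.2)
  mu_zero x γ j hj :=
    Prod.ext (S₁.mu_zero _ γ j (congrArg Prod.fst hj)) (S₂.mu_zero _ γ j (congrArg Prod.snd hj))

variable {S₁ : NGS T₁ Γ n} {S₂ : NGS T₂ Γ n} {P : Set (T₁ × T₂)}

theorem mk_mem_iff_zero_mk_mem (hP : IsGammaIdeal (S₁.prod S₂) P) (hsub : IsSubtractive P)
    (hcont : Set.univ ×ˢ ({0} : Set T₂) ⊆ P) (a : T₁) (b : T₂) :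
    (a, b) ∈ P ↔ ((0 : T₁), b) ∈ P := by
  have ha : (a, (0 : T₂)) ∈ P := hcont (by simp)
  have hsum : ((0 : T₁), b) + (a, 0) = (a, b) := by simp
  exact ⟨fun h => hsub _ _ ha (hsum ▸ h), fun h => hsum ▸ hP.add_mem _ _ h ha⟩

theorem mk_mem_iff_mk_zero_mem (hP : IsGammaIdeal (S₁.prod S₂) P) (hsub : IsSubtractive P)
    (hcont : ({0} : Set T₁) ×ˢ Set.univ ⊆ P) (a : T₁) (b : T₂) :
    (a, b) ∈ P ↔ (a, (0 : T₂)) ∈ P := by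
  have hb : ((0 : T₁), b) ∈ P := hcont (by simp)
  have hsum : (a, (0 : T₂)) + (0, b) = (a, b) := by simp
  exact ⟨fun h => hsub _ _ hb (hsum ▸ h), fun h => hsum ▸ hP.add_mem _ _ h hb⟩

theorem isPrimeGammaIdeal_snd_slice (hP : IsPrimeGammaIdeal (S₁.prod S₂) P)
    (hsub : IsSubtractive P) (hcont : Set.univ ×ˢ ({0} : Set T₂) ⊆ P) :
    IsPrimeGammaIdeal S₂ {b | ((0 : T₁), b) ∈ P} := by
  have hmem := mk_mem_iff_zero_mk_mem hP.isIdeal hsub hcont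
  refine ⟨⟨hP.isIdeal.zero_mem, fun a b ha hb => ?_, fun x γ j hj => ?_⟩, fun huniv => ?_,
    fun x γ hx => hP.prime (fun k => (0, x k)) γ ((hmem _ _).2 hx)⟩
  · simpa using hP.isIdeal.add_mem _ _ ha hb
  · exact (hmem _ _).1 (hP.isIdeal.mu_mem (fun k => (0, x k)) γ j hj)
  · exact hP.proper (Set.eq_univ_of_forall fun p =>
      (hmem p.1 p.2).2 (Set.eq_univ_iff_forall.1 huniv p.2))

theorem isPrimeGammaIdeal_fst_slice (hP : IsPrimeGammaIdeal (S₁.prod S₂) P)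
    (hsub : IsSubtractive P) (hcont : ({0} : Set T₁) ×ˢ Set.univ ⊆ P) :
    IsPrimeGammaIdeal S₁ {a | (a, (0 : T₂)) ∈ P} := by
  have hmem := mk_mem_iff_mk_zero_mem hP.isIdeal hsub hcont
  refine ⟨⟨hP.isIdeal.zero_mem, fun a b ha hb => ?_, fun x γ j hj => ?_⟩, fun huniv => ?_,
    fun x γ hx => hP.prime (fun k => (x k, 0)) γ ((hmem _ _).2 hx)⟩
  · simpa using hP.isIdeal.add_mem _ _ ha hb
  · exact (hmem _ _).1 (hP.isIdeal.mu_mem (fun k => (x k, 0)) γ j hj)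
  · exact hP.proper (Set.eq_univ_of_forall fun p =>
      (hmem p.1 p.2).2 (Set.eq_univ_iff_forall.1 huniv p.1))

theorem eq_univ_prod_snd_slice (hP : IsGammaIdeal (S₁.prod S₂) P) (hsub : IsSubtractive P)
    (hcont : Set.univ ×ˢ ({0} : Set T₂) ⊆ P) :
    P = Set.univ ×ˢ {b | ((0 : T₁), b) ∈ P} := by
  ext ⟨a, b⟩
  simpa using mk_mem_iff_zero_mk_mem hP hsub hcont a b

theorem eq_fst_slice_prod_univ (hP : IsGammaIdeal (S₁.prod S₂) P) (hsub : IsSubtractive P)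
    (hcont : ({0} : Set T₁) ×ˢ Set.univ ⊆ P) :
    P = {a | (a, (0 : T₂)) ∈ P} ×ˢ Set.univ := by
  ext ⟨a, b⟩
  simpa using mk_mem_iff_mk_zero_mem hP hsub hcont a b

end NGS

/-- the product of two `n`-ary `Γ`-semirings is an `n`-ary
`Γ`-semiring, and subtractive primes containing a factor ideal are of the form
`P₁ × T₂` or `T₁ × P₂`. -/
theorem product_structure_and_primes {T₁ : Type u} {T₂ : Type u}
    [AddCommMonoid T₁] [AddCommMonoid T₂]
    (S₁ : NGS T₁ Γ n) (S₂ : NGS T₂ Γ n) :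
    ∃ Q : NGS (T₁ × T₂) Γ n,
      (∀ (x : Fin n → T₁ × T₂) (γ : Fin (n - 1) → Γ),
        Q.mu x γ = (S₁.mu (fun k => (x k).1) γ, S₂.mu (fun k => (x k).2) γ)) ∧
      ∀ P : Set (T₁ × T₂), IsPrimeGammaIdeal Q P → IsSubtractive P →
        ((Set.univ ×ˢ ({0} : Set T₂) ⊆ P →
            ∃ P₂ : Set T₂, IsPrimeGammaIdeal S₂ P₂ ∧ P = Set.univ ×ˢ P₂) ∧
         (({0} : Set T₁) ×ˢ Set.univ ⊆ P →
            ∃ P₁ : Set T₁, IsPrimeGammaIdeal S₁ P₁ ∧ P = P₁ ×ˢ Set.univ)) :=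
  ⟨S₁.prod S₂, fun _ _ => rfl, fun _ hP hsub =>
    ⟨fun hcont => ⟨_, NGS.isPrimeGammaIdeal_snd_slice hP hsub hcont,
        NGS.eq_univ_prod_snd_slice hP.isIdeal hsub hcont⟩,
      fun hcont => ⟨_, NGS.isPrimeGammaIdeal_fst_slice hP hsub hcont,
        NGS.eq_fst_slice_prod_univ hP.isIdeal hsub hcont⟩⟩⟩
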